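/- arXiv:1512.00179 — 8 statements merged into one kernel-verified Lean document; each statement's English description precedes it below -/
import Mathlib

section
/- Let x be a real number with 0 < x < 1, let g = x(1+x+x^2)/(1+4x+x^2)^2, let R∞ = (1+4x+x^2)/(1+x+x^2), and for every integer k ≥ 0 define R_k = R∞ · (1-x^k)(1-x^{k+3}) / ((1-x^{k+1})(1-x^{k+2})). Then R_0 = 0 and for every k ≥ 1 one has R_k = 1 + g · R_k · (R_{k-1} + R_k + R_{k+1}). -/
/-! With `y = x ^ (k - 1)`, the three values `R (k - 1)`, `R k`, `R (k + 1)` are rational functions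
of `x` and `y` alone, so the recursion is a single identity of rational functions in two
variables; the denominators `1 - x ^ j` (`j ≥ 1`) do not vanish because `0 < x < 1`. -/

section SliceFactor

variable {K : Type*} [Field K]

/-- `R k = R∞ * sliceFactor x (x ^ k)`. -/
def sliceFactor (x y : K) : K := (1 - y) * (1 - y * x ^ 3) / ((1 - y * x) * (1 - y * x ^ 2))

theorem sliceFactor_one (x : K) : sliceFactor x 1 = 0 := by
  simp [sliceFactor]

theorem sliceFactor_recursion {x z g Rinf : K}
    (hg : g = x * (1 + x + x ^ 2) / (1 + 4 * x + x ^ 2) ^ 2)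
    (hRinf : Rinf = (1 + 4 * x + x ^ 2) / (1 + x + x ^ 2))
    (hq : 1 + x + x ^ 2 ≠ 0) (hq' : 1 + 4 * x + x ^ 2 ≠ 0)
    (h1 : 1 - z * x ≠ 0) (h2 : 1 - z * x ^ 2 ≠ 0) (h3 : 1 - z * x ^ 3 ≠ 0)
    (h4 : 1 - z * x ^ 4 ≠ 0) :
    Rinf * sliceFactor x (z * x) =
      1 + g * (Rinf * sliceFactor x (z * x)) *
        (Rinf * sliceFactor x z + Rinf * sliceFactor x (z * x) +
          Rinf * sliceFactor x (z * x ^ 2)) := by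
  subst hg hRinf
  simp only [sliceFactor]
  rw [show z * x * x = z * x ^ 2 by ring, show z * x * x ^ 2 = z * x ^ 3 by ring,
    show z * x * x ^ 3 = z * x ^ 4 by ring, show z * x ^ 2 * x = z * x ^ 3 by ring,
    show z * x ^ 2 * x ^ 2 = z * x ^ 4 by ring, show z * x ^ 2 * x ^ 3 = z * x ^ 5 by ring]
  rw [mul_comm z] at h1 h2 h3 h4
  field_simp
  ring

end SliceFactor

theorem stmt_2 (x : ℝ) (hx0 : 0 < x) (hx1 : x < 1)
    (g Rinf : ℝ)
    (hg : g = x * (1 + x + x^2) / (1 + 4*x + x^2)^2)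
    (hRinf : Rinf = (1 + 4*x + x^2) / (1 + x + x^2))
    (R : ℕ → ℝ)
    (hR : ∀ k : ℕ, R k = Rinf * ((1 - x^k) * (1 - x^(k+3))) /
        ((1 - x^(k+1)) * (1 - x^(k+2)))) :
    R 0 = 0 ∧ ∀ k : ℕ, 1 ≤ k →
      R k = 1 + g * R k * (R (k-1) + R k + R (k+1)) := by
  have hR' : ∀ k, R k = Rinf * sliceFactor x (x ^ k) := fun k => by
    rw [hR, sliceFactor, mul_div_assoc, ← pow_succ, ← pow_add, ← pow_add]
  have hden : ∀ m j : ℕ, 1 ≤ j → 1 - x ^ m * x ^ j ≠ 0 := fun m j hj => by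
    rw [← pow_add]
    exact (sub_pos.2 (pow_lt_one₀ hx0.le hx1 (by omega))).ne'
  refine ⟨by rw [hR', pow_zero, sliceFactor_one, mul_zero], fun k hk => ?_⟩
  obtain ⟨m, rfl⟩ : ∃ m, k = m + 1 := ⟨k - 1, by omega⟩
  rw [Nat.add_sub_cancel, hR', hR', hR', pow_succ x m, show m + 1 + 1 = m + 2 from rfl,
    pow_add x m 2]
  exact sliceFactor_recursion hg hRinf (by positivity) (by positivity)
    (by simpa using hden m 1 le_rfl) (hden m 2 (by norm_num)) (hden m 3 (by norm_num))
    (hden m 4 (by norm_num))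
end

section
/- Let C ≠ 0 and let Y₊, Y₋ be the two roots of the quadratic Y^2 + (1+C^2 - C(t-1)) Y + C^2(1+C)(t+1) = 0 (in Y, for fixed t). Then Y₊ = C(1+C)((1+C)^2 + Y₋)/(Y₋ - C(1+C)), provided Y₋ ≠ C(1+C). -/
theorem stmt_9 (C t Yp Ym : ℝ) (hC : C ≠ 0)
    (hYp : Yp^2 + (1 + C^2 - C*(t-1)) * Yp + C^2*(1+C)*(t+1) = 0)
    (hYm : Ym^2 + (1 + C^2 - C*(t-1)) * Ym + C^2*(1+C)*(t+1) = 0)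
    (hne : Yp ≠ Ym)
    (hden : Ym ≠ C*(1+C)) :
    Yp = C*(1+C)*((1+C)^2 + Ym) / (Ym - C*(1+C)) := by
  have hfac : (Yp - Ym) * (Yp + Ym + (1 + C^2 - C*(t-1))) = 0 := by
    linear_combination hYp - hYm
  have hsum : Yp + Ym + (1 + C^2 - C*(t-1)) = 0 := by
    rcases mul_eq_zero.mp hfac with h | h
    · exact absurd (sub_eq_zero.mp h) hne
    · exact h
  have hd : Ym - C*(1+C) ≠ 0 := sub_ne_zero.mpr hden
  field_simp
  linear_combination (Ym - C*(1+C)) * hsum - hYm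
end

section
/- Let C ≠ 0, let Y be such that Y ≠ C+C^2, Y ≠ 0, Y ≠ -(1+C), Y ≠ -(1+C)^2, and set t = (1+C+Y)(C^2+Y)/(C(Y-C-C^2)) and Φ = C(1+C-C^2+Y)/((1+C+Y)((1+C)^2+Y)). Then t(t+1)(1+C)^3 Φ^2 + (C(1+C-C^2) - t(1+3C+2C^2+2C^3) - t^2 C) Φ + C(t-C+C^2) = 0. -/
theorem stmt_11 (C Y : ℝ) (hC : C ≠ 0)
    (h1 : Y ≠ C + C^2) (h2 : Y ≠ 0) (h3 : Y ≠ -(1+C)) (h4 : Y ≠ -(1+C)^2)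
    (t Φ : ℝ)
    (ht : t = (1 + C + Y) * (C^2 + Y) / (C * (Y - C - C^2)))
    (hΦ : Φ = C * (1 + C - C^2 + Y) / ((1 + C + Y) * ((1+C)^2 + Y))) :
    t*(t+1)*(1+C)^3 * Φ^2 +
      (C*(1 + C - C^2) - t*(1 + 3*C + 2*C^2 + 2*C^3) - t^2*C) * Φ +
      C*(t - C + C^2) = 0 := by
  have d1 : Y - C - C^2 ≠ 0 := fun h => h1 (by linarith)
  have d2 : 1 + C + Y ≠ 0 := fun h => h3 (by linarith)
  have d3 : (1+C)^2 + Y ≠ 0 := fun h => h4 (by linarith)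
  subst ht hΦ
  field_simp
  ring
end

section
/- Let C ≠ 0 and suppose t', t, Y', Y satisfy: t' = (1+C+Y')(C^2+Y')/(C(Y'-C-C^2)), t = (1+C+Y)(C^2+Y)/(C(Y-C-C^2)), and the recursion t = (t'+1)Φ'/(1-(t'+1)Φ') where Φ' = C^2/(Y'(1+C+Y')) + 1/(t'+1). If moreover 1+C+Y+Y' ≠ 0 (and all denominators are nonzero), then Y = (C(1+C) Y' - C^2(1+C)^2)/(Y' + (1+C)^2). -/
theorem stmt_13 (C t' t Y' Y : ℝ) (hC : C ≠ 0)
    (ht' : t' = (1 + C + Y') * (C^2 + Y') / (C * (Y' - C - C^2)))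
    (ht : t = (1 + C + Y) * (C^2 + Y) / (C * (Y - C - C^2)))
    (Φ' : ℝ)
    (hΦ' : Φ' = C^2 / (Y' * (1 + C + Y')) + 1 / (t' + 1))
    (hrec : t = (t' + 1) * Φ' / (1 - (t' + 1) * Φ'))
    (hsum : 1 + C + Y + Y' ≠ 0)
    (hd1 : Y' ≠ 0) (hd2 : Y' ≠ C + C^2) (hd3 : Y ≠ C + C^2)
    (hd4 : 1 + C + Y' ≠ 0) (hd5 : t' + 1 ≠ 0)
    (hd6 : 1 - (t' + 1) * Φ' ≠ 0) (hd7 : Y' + (1+C)^2 ≠ 0) :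
    Y = (C*(1+C) * Y' - C^2*(1+C)^2) / (Y' + (1+C)^2) := by
  have hY'd : Y' - C - C^2 ≠ 0 := by intro h; apply hd2; linarith
  have hYd : Y - C - C^2 ≠ 0 := by intro h; apply hd3; linarith
  have h1 : t' + 1 = Y' * (Y' + (1+C)^2) / (C * (Y' - C - C^2)) := by
    rw [ht']; field_simp; ring
  have h2 : (t' + 1) * Φ' = Y' * (Y' + 1 + C - C^2) / ((1 + C + Y') * (Y' - C - C^2)) := by
    rw [hΦ', h1]; field_simp; ring
  have h3 : 1 - (t' + 1) * Φ' = -C * (Y' + (1+C)^2) / ((1 + C + Y') * (Y' - C - C^2)) := by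
    rw [h2]; field_simp; ring
  rw [h3, h2] at hrec
  rw [ht] at hrec
  rw [div_div_div_eq] at hrec
  have hden : (-C * (Y' + (1+C)^2)) ≠ 0 := by
    simp only [neg_mul, neg_ne_zero]; exact mul_ne_zero hC hd7
  rw [div_eq_div_iff (mul_ne_zero hC hYd) (mul_ne_zero (mul_ne_zero hd4 hY'd) hden)] at hrec
  have keyC : (1 + C + Y') * ((Y' - C - C^2) * (C * ((1 + C + Y + Y') * (Y * (Y' + (1+C)^2) - C * (1+C) * (Y' - C - C^2))))) = 0 := by
    linear_combination -hrec
  have key := (mul_eq_zero.mp ((mul_eq_zero.mp ((mul_eq_zero.mp keyC).resolve_left hd4)).resolve_left hY'd)).resolve_left hC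
  have h := (mul_eq_zero.mp key).resolve_left hsum
  rw [eq_div_iff hd7]; linarith [h]
end

section
/- Let x ∈ (0,1) and C = x/(1+x^2). The Möbius map f(Y) = (C(1+C)Y - C^2(1+C)^2)/(Y + (1+C)^2) has exactly two fixed points, α = (1/2)(1+C)(sqrt(1-4C^2)-1) = -x^2(1+x+x^2)/(1+x^2)^2 and β = -(1/2)(1+C)(sqrt(1-4C^2)+1) = -(1+x+x^2)/(1+x^2)^2, and the multiplier (β+(1+C)^2)/(α+(1+C)^2) equals x. -/
theorem stmt_14 (x : ℝ) (hx0 : 0 < x) (hx1 : x < 1)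
    (C : ℝ) (hC : C = x / (1 + x^2))
    (f : ℝ → ℝ)
    (hf : ∀ Y : ℝ, f Y = (C*(1+C)*Y - C^2*(1+C)^2) / (Y + (1+C)^2))
    (α β : ℝ)
    (hα : α = (1/2) * (1+C) * (Real.sqrt (1 - 4*C^2) - 1))
    (hβ : β = -(1/2) * (1+C) * (Real.sqrt (1 - 4*C^2) + 1)) :
    α = -x^2 * (1 + x + x^2) / (1 + x^2)^2 ∧
    β = -(1 + x + x^2) / (1 + x^2)^2 ∧
    f α = α ∧ f β = β ∧ α ≠ β ∧
    (∀ Y : ℝ, Y + (1+C)^2 ≠ 0 → f Y = Y → Y = α ∨ Y = β) ∧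
    (β + (1+C)^2) / (α + (1+C)^2) = x := by
  have hq : (0:ℝ) < 1 + x^2 := by positivity
  have hq' : (1:ℝ) + x^2 ≠ 0 := ne_of_gt hq
  have hs : Real.sqrt (1 - 4*C^2) = (1 - x^2)/(1 + x^2) := by
    have h1 : 1 - 4*C^2 = ((1 - x^2)/(1 + x^2))^2 := by
      rw [hC]; field_simp; ring
    rw [h1, Real.sqrt_sq (div_nonneg (by nlinarith) hq.le)]
  have hCx : 1 + C = (1 + x + x^2)/(1 + x^2) := by rw [hC]; field_simp; ring
  have hα' : α = -x^2 * (1 + x + x^2) / (1 + x^2)^2 := by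
    rw [hα, hs, hCx]; field_simp; ring
  have hβ' : β = -(1 + x + x^2) / (1 + x^2)^2 := by
    rw [hβ, hs, hCx]; field_simp; ring
  have hp : (0:ℝ) < 1 + x + x^2 := by positivity
  have hαd : α + (1+C)^2 = (1 + x + x^2)*(1 + x)/(1 + x^2)^2 := by
    rw [hα', hCx]; field_simp; ring
  have hβd : β + (1+C)^2 = (1 + x + x^2)*(x*(1 + x))/(1 + x^2)^2 := by
    rw [hβ', hCx]; field_simp; ring
  have hαd0 : α + (1+C)^2 ≠ 0 := by rw [hαd]; positivity
  have hβd0 : β + (1+C)^2 ≠ 0 := by rw [hβd]; positivity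
  refine ⟨hα', hβ', ?_, ?_, ?_, ?_, ?_⟩
  · rw [hf, div_eq_iff hαd0, hα', hC]; field_simp; ring
  · rw [hf, div_eq_iff hβd0, hβ', hC]; field_simp; ring
  · intro h
    rw [hα', hβ', div_eq_div_iff (by positivity) (by positivity)] at h
    nlinarith [mul_pos (mul_pos hp (pow_pos hq 2)) (by nlinarith : (0:ℝ) < 1 - x^2)]
  · intro Y hY hfY
    rw [hf, div_eq_iff hY] at hfY
    have key : (Y - α) * (Y - β) = Y*(Y + (1+C)^2) - (C*(1+C)*Y - C^2*(1+C)^2) := by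
      rw [hα', hβ', hC]; field_simp; ring
    have hfac : (Y - α) * (Y - β) = 0 := by rw [key]; linarith
    rcases mul_eq_zero.mp hfac with h | h
    · left; linarith
    · right; linarith
  · rw [hαd, hβd]
    rw [div_div_div_eq, div_eq_iff (by positivity)]
    ring
end

section
/- Let x ∈ (0,1), C = x/(1+x^2), and for integers k ≥ 1 define Y_k = -x^2 (1+x+x^2)/(1+x^2)^2 · (1-x^k)/(1-x^{k+2}). Then Y_1 = -C^2, and for every k ≥ 2, Y_k = (C(1+C) Y_{k-1} - C^2(1+C)^2)/(Y_{k-1} + (1+C)^2). -/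
theorem stmt_15 (x : ℝ) (hx0 : 0 < x) (hx1 : x < 1)
    (C : ℝ) (hC : C = x / (1 + x^2))
    (Y : ℕ → ℝ)
    (hY : ∀ k : ℕ, 1 ≤ k →
      Y k = -x^2 * (1 + x + x^2) / (1 + x^2)^2 * ((1 - x^k) / (1 - x^(k+2)))) :
    Y 1 = -C^2 ∧
    ∀ k : ℕ, 2 ≤ k →
      Y k = (C*(1+C) * Y (k-1) - C^2*(1+C)^2) / (Y (k-1) + (1+C)^2) := by
  have hx2 : (0:ℝ) < 1 + x^2 := by positivity
  have hx2' : (1:ℝ) + x^2 ≠ 0 := ne_of_gt hx2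
  have hpow : ∀ n : ℕ, 1 ≤ n → x ^ n < 1 := fun n hn =>
    pow_lt_one₀ hx0.le hx1 (by omega)
  have hpos : ∀ n : ℕ, 1 ≤ n → (0:ℝ) < 1 - x ^ n := fun n hn => by
    have := hpow n hn; linarith
  constructor
  · rw [hY 1 le_rfl, hC]
    have h3 : (1:ℝ) - x ^ (1+2) ≠ 0 := ne_of_gt (hpos 3 (by norm_num))
    field_simp
    ring
  · intro k hk
    obtain ⟨j, rfl⟩ : ∃ j, k = j + 1 := ⟨k - 1, by omega⟩
    have hj : 1 ≤ j := by omega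
    have h2 : (0:ℝ) < 1 - x ^ (j+2) := hpos (j+2) (by omega)
    have h3 : (0:ℝ) < 1 - x ^ (j+3) := hpos (j+3) (by omega)
    have hYj : Y ((j+1) - 1) = -x^2 * (1 + x + x^2) / (1 + x^2)^2 * ((1 - x^j) / (1 - x^(j+2))) := by
      simpa using hY j hj
    have key : Y ((j+1)-1) + (1+C)^2
        = ((1+x+x^2)*(1+x)*(1-x^(j+3))) / ((1+x^2)^2*(1-x^(j+2))) := by
      rw [hYj, hC]
      field_simp
      ring
    have hD : Y ((j+1)-1) + (1+C)^2 ≠ 0 := by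
      rw [key]
      have : (0:ℝ) < ((1+x+x^2)*(1+x)*(1-x^(j+3))) / ((1+x^2)^2*(1-x^(j+2))) := by
        positivity
      exact ne_of_gt this
    rw [hY (j+1) (by omega), eq_div_iff hD, hYj, hC]
    field_simp
    ring
end

section
/- Let x ∈ (0,1), C = x/(1+x^2), and for k ≥ 1 let Y_k = -x^2(1+x+x^2)/(1+x^2)^2 · (1-x^k)/(1-x^{k+2}). Then (1+C+Y_k)(C^2+Y_k)/(C(Y_k - C - C^2)) = (x/(1+x^2)) · (1-x^{k-1})(1-x^{k+4})/((1-x^{k+1})(1-x^{k+2})). -/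
theorem stmt_16 (x : ℝ) (hx0 : 0 < x) (hx1 : x < 1)
    (C : ℝ) (hC : C = x / (1 + x^2))
    (Y : ℕ → ℝ)
    (hY : ∀ k : ℕ, 1 ≤ k →
      Y k = -x^2 * (1 + x + x^2) / (1 + x^2)^2 * ((1 - x^k) / (1 - x^(k+2)))) :
    ∀ k : ℕ, 1 ≤ k →
      (1 + C + Y k) * (C^2 + Y k) / (C * (Y k - C - C^2)) =
        (x / (1 + x^2)) * ((1 - x^(k-1)) * (1 - x^(k+4))) /
          ((1 - x^(k+1)) * (1 - x^(k+2))) := by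
  intro k hk
  obtain ⟨m, rfl⟩ := Nat.exists_eq_add_of_le hk
  have hxlt : ∀ n : ℕ, 1 ≤ n → x ^ n < 1 := fun n hn =>
    pow_lt_one₀ hx0.le hx1 (by omega)
  have hpos : ∀ n : ℕ, 1 ≤ n → (0:ℝ) < 1 - x ^ n := fun n hn =>
    by linarith [hxlt n hn]
  have h2 : (0:ℝ) < 1 + x^2 := by positivity
  have hC0 : 0 < C := by rw [hC]; positivity
  have h1 : (0:ℝ) < 1 - x ^ (1 + m) := hpos _ (by omega)
  have h3 : (0:ℝ) < 1 - x ^ (1 + m + 2) := hpos _ (by omega)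
  have h4 : (0:ℝ) < 1 - x ^ (1 + m + 1) := hpos _ (by omega)
  have hYneg : Y (1 + m) < 0 := by
    rw [hY _ hk]
    have hp : (0:ℝ) < x^2 * (1 + x + x^2) / (1 + x^2)^2 * ((1 - x^(1+m)) / (1 - x^(1+m+2))) := by
      positivity
    have he : -x^2 * (1 + x + x^2) / (1 + x^2)^2 * ((1 - x^(1+m)) / (1 - x^(1+m+2)))
        = -(x^2 * (1 + x + x^2) / (1 + x^2)^2 * ((1 - x^(1+m)) / (1 - x^(1+m+2)))) := by
      ring
    rw [he]; linarith
  have hden : C * (Y (1 + m) - C - C^2) ≠ 0 := by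
    have : Y (1 + m) - C - C^2 < 0 := by nlinarith [sq_nonneg C]
    exact mul_ne_zero (ne_of_gt hC0) (ne_of_lt this)
  set y := x ^ m with hy
  have e1 : x ^ (1 + m) = x * y := by rw [hy, pow_add, pow_one]
  have e3 : x ^ (1 + m + 2) = x^3 * y := by
    rw [show 1 + m + 2 = 3 + m by ring, pow_add]
  have e4 : x ^ (1 + m + 1) = x^2 * y := by
    rw [show 1 + m + 1 = 2 + m by ring, pow_add]
  have e5 : x ^ (1 + m + 4) = x^5 * y := by
    rw [show 1 + m + 4 = 5 + m by ring, pow_add]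
  have hm : 1 + m - 1 = m := by omega
  rw [hY _ hk, hC] at hden ⊢
  rw [e1, e3] at hden
  rw [hm, e1, e3, e4, e5]
  rw [e1] at h1; rw [e3] at h3; rw [e4] at h4
  have h1' : (1:ℝ) - x * y ≠ 0 := ne_of_gt h1
  have h3' : (1:ℝ) - x^3 * y ≠ 0 := ne_of_gt h3
  have h4' : (1:ℝ) - x^2 * y ≠ 0 := ne_of_gt h4
  have h2' : (1:ℝ) + x^2 ≠ 0 := ne_of_gt h2
  have hx : x ≠ 0 := ne_of_gt hx0
  rw [div_eq_div_iff hden (mul_ne_zero h4' h3')]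
  field_simp
  ring
end

section
/- Let x ∈ (0,1) and define t_k = (x/(1+x^2)) (1-x^{k-1})(1-x^{k+4})/((1-x^{k+1})(1-x^{k+2})) for k ≥ 1. Then t_k + 1 = ((1+x+x^2)/(1+x^2)) · (1-x^k)(1-x^{k+3})/((1-x^{k+1})(1-x^{k+2})), and the sequence t_k is strictly increasing with limit x/(1+x^2) as k → ∞. -/
theorem stmt_17 (x : ℝ) (hx0 : 0 < x) (hx1 : x < 1)
    (t : ℕ → ℝ)
    (ht : ∀ k : ℕ, 1 ≤ k →
      t k = (x / (1 + x^2)) * ((1 - x^(k-1)) * (1 - x^(k+4))) /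
        ((1 - x^(k+1)) * (1 - x^(k+2)))) :
    (∀ k : ℕ, 1 ≤ k →
      t k + 1 = ((1 + x + x^2) / (1 + x^2)) * ((1 - x^k) * (1 - x^(k+3))) /
        ((1 - x^(k+1)) * (1 - x^(k+2)))) ∧
    (∀ k : ℕ, 1 ≤ k → t k < t (k+1)) ∧
    Filter.Tendsto (fun k : ℕ => t k) Filter.atTop (nhds (x / (1 + x^2))) := by
  have hx0' : (0:ℝ) ≤ x := hx0.le
  have hpow : ∀ n : ℕ, n ≠ 0 → x ^ n < 1 := fun n hn => pow_lt_one₀ hx0' hx1 hn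
  have hposn : ∀ n : ℕ, 0 < 1 - x ^ (n+1) := fun n => by
    have := hpow (n+1) (Nat.succ_ne_zero n); linarith
  have hq : (0:ℝ) < 1 + x^2 := by positivity
  have hq' : (1:ℝ) + x^2 ≠ 0 := ne_of_gt hq
  have h1 : ∀ k : ℕ, 1 ≤ k →
      t k + 1 = ((1 + x + x^2) / (1 + x^2)) * ((1 - x^k) * (1 - x^(k+3))) /
        ((1 - x^(k+1)) * (1 - x^(k+2))) := by
    intro k hk
    obtain ⟨m, rfl⟩ := Nat.exists_eq_add_of_le hk
    rw [ht (1+m) hk]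
    simp only [Nat.add_sub_cancel_left]
    have d1 : (1:ℝ) - x ^ (1+m+1) ≠ 0 := ne_of_gt (by
      have := hposn (m+1); rw [show 1+m+1 = m+1+1 by ring]; linarith)
    have d2 : (1:ℝ) - x ^ (1+m+2) ≠ 0 := ne_of_gt (by
      have := hposn (m+2); rw [show 1+m+2 = m+2+1 by ring]; linarith)
    field_simp
    ring
  refine ⟨h1, ?_, ?_⟩
  · intro k hk
    have e1 := h1 k hk
    have e2 := h1 (k+1) (by omega)
    have hD1 : (0:ℝ) < (1 - x^(k+1)) * (1 - x^(k+2)) :=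
      mul_pos (hposn k) (hposn (k+1))
    have hD2 : (0:ℝ) < (1 - x^(k+1+1)) * (1 - x^(k+1+2)) :=
      mul_pos (hposn (k+1)) (hposn (k+2))
    have hA : (0:ℝ) < (1 + x + x^2) / (1 + x^2) := by positivity
    have hlt : t k + 1 < t (k+1) + 1 := by
      rw [e1, e2, div_lt_div_iff₀ hD1 hD2]
      have key : ((1 + x + x^2)) * ((1 - x^(k+1)) * (1 - x^(k+1+3))) *
            ((1 - x^(k+1)) * (1 - x^(k+2)))
          - ((1 + x + x^2)) * ((1 - x^k) * (1 - x^(k+3))) *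
            ((1 - x^(k+1+1)) * (1 - x^(k+1+2)))
          = (1 + x + x^2) * (x^k * (1-x)^3 * (1+x) * (1 + x^(k+2)) * (1 - x^(k+2))) := by
        ring
      have hpos : (0:ℝ) < (1 + x + x^2) * (x^k * (1-x)^3 * (1+x) * (1 + x^(k+2)) * (1 - x^(k+2))) := by
        have h2 := hposn (k+1)
        have h3 : (0:ℝ) < x ^ k := pow_pos hx0 k
        have h4 : (0:ℝ) < 1 + x ^ (k+2) := by positivity
        have h5 : (0:ℝ) < (1-x)^3 := pow_pos (by linarith) 3
        have h6 : (0:ℝ) < 1 - x ^ (k+2) := hposn (k+1)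
        have h7 : (0:ℝ) < 1 + x + x^2 := by positivity
        exact mul_pos h7 (mul_pos (mul_pos (mul_pos (mul_pos h3 h5) (by linarith)) h4) h6)
      have hlt' : ((1 + x + x^2)) * ((1 - x^k) * (1 - x^(k+3))) *
            ((1 - x^(k+1+1)) * (1 - x^(k+1+2)))
          < ((1 + x + x^2)) * ((1 - x^(k+1)) * (1 - x^(k+1+3))) *
            ((1 - x^(k+1)) * (1 - x^(k+2))) := by linarith
      calc (1 + x + x^2) / (1 + x^2) * ((1 - x^k) * (1 - x^(k+3))) *
            ((1 - x^(k+1+1)) * (1 - x^(k+1+2)))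
          = (((1 + x + x^2)) * ((1 - x^k) * (1 - x^(k+3))) *
            ((1 - x^(k+1+1)) * (1 - x^(k+1+2)))) / (1 + x^2) := by ring
        _ < (((1 + x + x^2)) * ((1 - x^(k+1)) * (1 - x^(k+1+3))) *
            ((1 - x^(k+1)) * (1 - x^(k+2)))) / (1 + x^2) := by
            exact (div_lt_div_iff_of_pos_right hq).mpr hlt'
        _ = (1 + x + x^2) / (1 + x^2) * ((1 - x^(k+1)) * (1 - x^(k+1+3))) *
            ((1 - x^(k+1)) * (1 - x^(k+2))) := by ring
    linarith
  · have hlim : Filter.Tendsto (fun k : ℕ => x ^ k) Filter.atTop (nhds 0) :=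
      tendsto_pow_atTop_nhds_zero_of_lt_one hx0' hx1
    have hsub : Filter.Tendsto (fun k : ℕ => x ^ (k - 1)) Filter.atTop (nhds 0) :=
      hlim.comp (Filter.tendsto_sub_atTop_nat 1)
    have hadd : ∀ j : ℕ, Filter.Tendsto (fun k : ℕ => x ^ (k + j)) Filter.atTop (nhds 0) :=
      fun j => hlim.comp (Filter.tendsto_add_atTop_nat j)
    have hF : Filter.Tendsto (fun k : ℕ =>
        (x / (1 + x^2)) * ((1 - x^(k-1)) * (1 - x^(k+4))) /
          ((1 - x^(k+1)) * (1 - x^(k+2)))) Filter.atTop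
        (nhds ((x / (1 + x^2)) * ((1 - 0) * (1 - 0)) / ((1 - 0) * (1 - 0)))) := by
      apply Filter.Tendsto.div
      · exact tendsto_const_nhds.mul
          ((tendsto_const_nhds.sub hsub).mul (tendsto_const_nhds.sub (hadd 4)))
      · exact (tendsto_const_nhds.sub (hadd 1)).mul (tendsto_const_nhds.sub (hadd 2))
      · norm_num
    simp only [sub_zero, mul_one, one_mul, div_one] at hF
    refine hF.congr' ?_
    filter_upwards [Filter.eventually_ge_atTop 1] with k hk
    exact (ht k hk).symm
end
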